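/- arXiv:1706.01389 — 3 statements merged into one kernel-verified Lean document; each statement's English description precedes it below -/
import Mathlib

section
/- Suppose in Lemma 1's setting: 0 < τ² < ∞, 0 < σ_η² < ∞, D̂ = Zγ̂ ≠ 0, and Λ_min(Z^T Z/n) > 0. Define A = (1/(nσ_η²)) Z^T P_{D̂} Z and B = (1/n)(Z^T Z/σ_η² + τ^{-2} I). Then the largest eigenvalue c* of AB^{-1} satisfies 0 < c* < 1. -/
/-!
`A` is a positive multiple of `a aᵀ` with `a = Zᵀ D̂ ≠ 0`, so `A B⁻¹ a = k (aᵀ B⁻¹ a) a` exhibits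
a positive eigenvalue. Conversely, if `A B⁻¹ v = μ v`, then `y = B⁻¹ v ≠ 0` satisfies
`A y = μ B y`; since `B - A = (Zᵀ P_{D̂}^⊥ Z / σ² + I / τ²) / n` is positive definite,
`μ yᵀ B y = yᵀ A y < yᵀ B y`, whence `μ < 1`.
-/

open Matrix

/-- The largest eigenvalue of a real matrix, as the supremum of its real spectrum. -/
noncomputable def lmax {J : ℕ} (M : Matrix (Fin J) (Fin J) ℝ) : ℝ :=
  sSup (spectrum ℝ M)

/-- The smallest eigenvalue of a real matrix, as the infimum of its real spectrum. -/
noncomputable def lmin {J : ℕ} (M : Matrix (Fin J) (Fin J) ℝ) : ℝ :=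
  sInf (spectrum ℝ M)

namespace Matrix

variable {ι : Type*} [Fintype ι]

theorem mem_spectrum_of_mulVec_eq_smul [DecidableEq ι] {K : Type*} [Field K] {M : Matrix ι ι K}
    {v : ι → K} {μ : K} (hv : v ≠ 0) (h : M *ᵥ v = μ • v) : μ ∈ spectrum K M := by
  rw [← spectrum_toLin']
  exact (Module.End.hasEigenvalue_of_hasEigenvector (x := v)
    (Module.End.hasEigenvector_iff.2 ⟨Module.End.mem_eigenspace_iff.2 h, hv⟩)).mem_spectrum

theorem vecMulVec_mul_mulVec {R : Type*} [CommRing R] (a b v : ι → R) (M : Matrix ι ι R) :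
    (vecMulVec a b * M) *ᵥ v = (b ⬝ᵥ M *ᵥ v) • a := by
  rw [← mulVec_mulVec, vecMulVec_mulVec, op_smul_eq_smul]

theorem posSemidef_one_sub_smul_vecMulVec_self [DecidableEq ι] (d : ι → ℝ) :
    (1 - (d ⬝ᵥ d)⁻¹ • vecMulVec d d).PosSemidef := by
  refine PosSemidef.of_dotProduct_mulVec_nonneg ?_ fun x => ?_
  · exact isHermitian_one.sub ((posSemidef_vecMulVec_self_star d).isHermitian.smul (.all _))
  have hcs : (d ⬝ᵥ x) ^ 2 ≤ (d ⬝ᵥ d) * (x ⬝ᵥ x) := by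
    simpa [dotProduct, pow_two] using Finset.sum_mul_sq_le_sq_mul_sq Finset.univ d x
  have hproj : (d ⬝ᵥ d)⁻¹ * (d ⬝ᵥ x) ^ 2 ≤ x ⬝ᵥ x := by
    rcases (by simpa using dotProduct_self_star_nonneg d : 0 ≤ d ⬝ᵥ d).eq_or_lt with h | h
    · simpa [← h] using dotProduct_self_star_nonneg x
    · rwa [inv_mul_le_iff₀ h]
  simp only [star_trivial, sub_mulVec, one_mulVec, smul_mulVec, vecMulVec_mulVec, dotProduct_sub,
    dotProduct_smul, op_smul_eq_smul, smul_eq_mul, dotProduct_comm x d]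
  rw [pow_two] at hproj
  linarith

theorem lt_one_of_mem_spectrum_mul_inv [DecidableEq ι] {A B : Matrix ι ι ℝ} (hB : B.PosDef)
    (hBA : (B - A).PosDef) {μ : ℝ} (hμ : μ ∈ spectrum ℝ (A * B⁻¹)) : μ < 1 := by
  rw [← spectrum_toLin', ← Module.End.hasEigenvalue_iff_mem_spectrum] at hμ
  obtain ⟨v, hv⟩ := hμ.exists_hasEigenvector
  have hAv : (A * B⁻¹) *ᵥ v = μ • v := by simpa using hv.apply_eq_smul
  have hBBinv : B * B⁻¹ = 1 := mul_nonsing_inv B ((isUnit_iff_isUnit_det B).1 hB.isUnit)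
  set y := B⁻¹ *ᵥ v
  have hBy : B *ᵥ y = v := by rw [mulVec_mulVec, hBBinv, one_mulVec]
  have hy : y ≠ 0 := fun h => hv.2 (by rw [← hBy, h, mulVec_zero])
  have hAy : A *ᵥ y = μ • B *ᵥ y := by rw [hBy, ← hAv, ← mulVec_mulVec]
  have hpos := hB.dotProduct_mulVec_pos hy
  have hgap := hBA.dotProduct_mulVec_pos hy
  rw [sub_mulVec, dotProduct_sub, hAy, dotProduct_smul, smul_eq_mul] at hgap
  rw [star_trivial] at hpos hgap
  nlinarith

end Matrix

theorem le_lmax_of_mem_spectrum {J : ℕ} {M : Matrix (Fin J) (Fin J) ℝ} {μ : ℝ}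
    (hμ : μ ∈ spectrum ℝ M) : μ ≤ lmax M :=
  le_csSup M.finite_spectrum.bddAbove hμ

theorem lmax_mem_spectrum {J : ℕ} {M : Matrix (Fin J) (Fin J) ℝ} (h : (spectrum ℝ M).Nonempty) :
    lmax M ∈ spectrum ℝ M :=
  h.csSup_mem M.finite_spectrum

theorem lmax_smul_vecMulVec_mul_inv_mem_Ioo {J : ℕ} {a : Fin J → ℝ} (ha : a ≠ 0) {k : ℝ}
    (hk : 0 < k) {B : Matrix (Fin J) (Fin J) ℝ} (hB : B.PosDef)
    (hBA : (B - k • vecMulVec a a).PosDef) :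
    lmax (k • vecMulVec a a * B⁻¹) ∈ Set.Ioo 0 1 := by
  set μ := k * (a ⬝ᵥ B⁻¹ *ᵥ a)
  have hμ : μ ∈ spectrum ℝ (k • vecMulVec a a * B⁻¹) := mem_spectrum_of_mulVec_eq_smul ha <| by
    rw [smul_mul_assoc, smul_mulVec, vecMulVec_mul_mulVec, smul_smul]
  have hμpos : 0 < μ := mul_pos hk (by simpa using hB.inv.dotProduct_mulVec_pos ha)
  exact ⟨hμpos.trans_le (le_lmax_of_mem_spectrum hμ),
    lt_one_of_mem_spectrum_mul_inv hB hBA (lmax_mem_spectrum ⟨μ, hμ⟩)⟩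

theorem stmt_4_general {n J : ℕ} (Z : Matrix (Fin n) (Fin J) ℝ) (γ : Fin J → ℝ)
    (τsq σsq : ℝ) (hτ : 0 < τsq) (hσ : 0 < σsq)
    (D : Fin n → ℝ) (hD : D = Z.mulVec γ) (hD0 : D ≠ 0)
    (P : Matrix (Fin n) (Fin n) ℝ) (hP : P = (D ⬝ᵥ D)⁻¹ • vecMulVec D D)
    (A B : Matrix (Fin J) (Fin J) ℝ)
    (hA : A = ((n : ℝ) * σsq)⁻¹ • (Zᵀ * P * Z))
    (hB : B = (n : ℝ)⁻¹ • (σsq⁻¹ • (Zᵀ * Z) + τsq⁻¹ • (1 : Matrix (Fin J) (Fin J) ℝ)))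
    (c : ℝ) (hc : c = lmax (A * B⁻¹)) :
    0 < c ∧ c < 1 := by
  have hn : (0 : ℝ) < n := by
    have : n ≠ 0 := by rintro rfl; exact hD0 (Subsingleton.elim _ _)
    positivity
  have hDD : 0 < D ⬝ᵥ D := by simpa using dotProduct_star_self_pos_iff.2 hD0
  set a := Zᵀ *ᵥ D
  have ha : a ≠ 0 := fun h => hDD.ne' <| by
    rw [← dotProduct_zero γ, ← h, dotProduct_mulVec, vecMul_transpose, ← hD]
  have hAa : A = (((n : ℝ) * σsq)⁻¹ * (D ⬝ᵥ D)⁻¹) • vecMulVec a a := by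
    rw [hA, hP, Matrix.mul_smul, Matrix.smul_mul, mul_vecMulVec, vecMulVec_mul, ← mulVec_transpose,
      smul_smul]
  have hPD : ∀ Q : Matrix (Fin n) (Fin n) ℝ, Q.PosSemidef →
      ((n : ℝ)⁻¹ • (σsq⁻¹ • (Zᵀ * Q * Z) + τsq⁻¹ • (1 : Matrix (Fin J) (Fin J) ℝ))).PosDef :=
    fun Q hQ => (PosDef.posSemidef_add
      ((hQ.conjTranspose_mul_mul_same Z).smul (inv_pos.2 hσ).le)
      (PosDef.one.smul (inv_pos.2 hτ))).smul (inv_pos.2 hn)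
  have hBpd : B.PosDef := by simpa [hB] using hPD 1 PosSemidef.one
  have hBA : (B - A).PosDef := by
    convert hPD _ (posSemidef_one_sub_smul_vecMulVec_self D) using 1
    rw [hB, hA, hP, Matrix.mul_sub, Matrix.sub_mul, Matrix.mul_one]
    module
  rw [hc, hAa]
  exact lmax_smul_vecMulVec_mul_inv_mem_Ioo ha (by positivity) hBpd (hAa ▸ hBA)

/-- Lemma 1: if `0 < τ²`, `0 < σ_η²`, `D̂ = Zγ̂ ≠ 0` and
`Λ_min(ZᵀZ/n) > 0`, then with `A = Zᵀ P_{D̂} Z/(n σ_η²)` and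
`B = (ZᵀZ/σ_η² + τ⁻² I)/n`, the largest eigenvalue `c*` of `A B⁻¹` satisfies
`0 < c* < 1`. -/
theorem stmt_4 {n J : ℕ} (Z : Matrix (Fin n) (Fin J) ℝ) (γ : Fin J → ℝ)
    (τsq σsq : ℝ) (hτ : 0 < τsq) (hσ : 0 < σsq)
    (D : Fin n → ℝ) (hD : D = Z.mulVec γ) (hD0 : D ≠ 0)
    (hZ : 0 < lmin ((n : ℝ)⁻¹ • (Zᵀ * Z)))
    (P : Matrix (Fin n) (Fin n) ℝ) (hP : P = (D ⬝ᵥ D)⁻¹ • vecMulVec D D)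
    (A B : Matrix (Fin J) (Fin J) ℝ)
    (hA : A = ((n : ℝ) * σsq)⁻¹ • (Zᵀ * P * Z))
    (hB : B = (n : ℝ)⁻¹ • (σsq⁻¹ • (Zᵀ * Z) + τsq⁻¹ • (1 : Matrix (Fin J) (Fin J) ℝ)))
    (c : ℝ) (hc : c = lmax (A * B⁻¹)) :
    0 < c ∧ c < 1 :=
  stmt_4_general Z γ τsq σsq hτ hσ D hD hD0 P hP A B hA hB c hc
end

section
/- In the setting of Theorem 1, the 'E_1 term' simplification holds: with Ξ = M^{-1} for the block matrix M above, for any vector η̂ ∈ ℝ^n, Ξ_{1,1} D̂^T η̂/σ_η² + Ξ_{1,J} Z^T P_{D̂} η̂/σ_η² = D̂^T η̂ / (D̂^T D̂), where Ξ_{1,1} is the top-left scalar entry and Ξ_{1,J} the top-right 1×J block of Ξ. -/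
open Matrix

/-- the `E₁` term simplification in Theorem 1: with `Ξ = M⁻¹` for the
block matrix `M = [[D̂ᵀD̂/σ², D̂ᵀZ/σ²],[ZᵀD̂/σ², ZᵀZ/σ² + Γ⁻¹]]` (with `D̂ ≠ 0`,
`σ² > 0`, `Γ ≻ 0`, `M` invertible), and `P_{D̂} = D̂D̂ᵀ/(D̂ᵀD̂)`, for every `η̂`
one has `Ξ₁₁ D̂ᵀη̂/σ² + Ξ₁J Zᵀ P_{D̂} η̂/σ² = D̂ᵀη̂/(D̂ᵀD̂)`. -/
theorem stmt_6 {n J : ℕ} (Z : Matrix (Fin n) (Fin J) ℝ) (D : Fin n → ℝ)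
    (hD0 : D ≠ 0) (σsq : ℝ) (hσ : 0 < σsq)
    (Γ : Matrix (Fin J) (Fin J) ℝ) (hΓ : Γ.PosDef)
    (P : Matrix (Fin n) (Fin n) ℝ) (hP : P = (D ⬝ᵥ D)⁻¹ • vecMulVec D D)
    (M : Matrix (Unit ⊕ Fin J) (Unit ⊕ Fin J) ℝ)
    (hM : M = fromBlocks
      (fun _ _ => (D ⬝ᵥ D) / σsq)
      (fun _ j => (Zᵀ.mulVec D) j / σsq)
      (fun j _ => (Zᵀ.mulVec D) j / σsq)
      (σsq⁻¹ • (Zᵀ * Z) + Γ⁻¹))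
    (hMinv : IsUnit M.det)
    (η : Fin n → ℝ) :
    (M⁻¹).toBlocks₁₁ () () * (D ⬝ᵥ η) / σsq
        + (fun j => (M⁻¹).toBlocks₁₂ () j) ⬝ᵥ (fun j => ((Zᵀ * P).mulVec η) j / σsq)
      = (D ⬝ᵥ η) / (D ⬝ᵥ D) := by
  have ha : (D ⬝ᵥ D) ≠ 0 := fun h => hD0 (by simpa using (dotProduct_self_eq_zero).mp h)
  have hkey0 : M⁻¹ * M = 1 := Matrix.nonsing_inv_mul M hMinv
  have key : M⁻¹ (Sum.inl ()) (Sum.inl ()) * ((D ⬝ᵥ D) / σsq)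
      + ∑ j, M⁻¹ (Sum.inl ()) (Sum.inr j) * ((Zᵀ.mulVec D) j / σsq) = 1 := by
    have := congrFun (congrFun hkey0 (Sum.inl ())) (Sum.inl ())
    rw [Matrix.mul_apply, Fintype.sum_sum_type] at this
    simpa [hM, fromBlocks] using this
  have hPv : P.mulVec η = ((D ⬝ᵥ η) / (D ⬝ᵥ D)) • D := by
    rw [hP]
    ext i
    simp only [Matrix.mulVec, dotProduct, Matrix.smul_apply, vecMulVec_apply,
      smul_eq_mul, Pi.smul_apply]
    rw [Finset.sum_congr rfl (fun k _ => show (∑ m, D m * D m)⁻¹ * (D i * D k) * η k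
      = ((∑ m, D m * D m)⁻¹ * D i) * (D k * η k) by ring), ← Finset.mul_sum,
      div_eq_mul_inv]
    ring
  have hZP : ∀ j, ((Zᵀ * P).mulVec η) j = ((D ⬝ᵥ η) / (D ⬝ᵥ D)) * (Zᵀ.mulVec D) j := by
    intro j
    rw [← Matrix.mulVec_mulVec, hPv, Matrix.mulVec_smul]
    simp
  simp only [Matrix.toBlocks₁₁, Matrix.toBlocks₁₂, of_apply]
  have hdot : (fun j => M⁻¹ (Sum.inl ()) (Sum.inr j)) ⬝ᵥ (fun j => ((Zᵀ * P).mulVec η) j / σsq)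
      = (∑ j, M⁻¹ (Sum.inl ()) (Sum.inr j) * ((Zᵀ.mulVec D) j / σsq)) * ((D ⬝ᵥ η) / (D ⬝ᵥ D)) := by
    rw [dotProduct, Finset.sum_mul]
    exact Finset.sum_congr rfl fun j _ => by rw [hZP j]; ring
  rw [hdot]
  have h1 : M⁻¹ (Sum.inl ()) (Sum.inl ()) * (D ⬝ᵥ η) / σsq
      = (M⁻¹ (Sum.inl ()) (Sum.inl ()) * ((D ⬝ᵥ D) / σsq)) * ((D ⬝ᵥ η) / (D ⬝ᵥ D)) := by
    field_simp
  rw [h1, ← add_mul, key, one_mul]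
end

section
/- Theorem 1 (empirical error bound for the ridge-type TSLS estimator): Suppose Y = D̂β + Zα + η̂ with D̂ = Zγ̂ ≠ 0, Γ = τ²I, A = Z^T P_{D̂} Z/(nσ_η²), B = (Z^TZ/σ_η² + τ^{-2}I)/n, and c* = Λ_max(AB^{-1}) ∈ (0,1). Let (β̂, α̂) be the minimizer of ‖Y − D̂β − Zα‖₂² + (σ_η²/τ²)‖α − μ_α‖₂². Then |β̂ − β| ≤ c*σ_η²‖γ̂‖₂‖α − μ_α‖₂ / (τ²(1−c*) D̂^TD̂) + c*‖γ̂‖₂‖Z^T P_{D̂}^⊥ η̂‖₂ / ((1−c*) D̂^TD̂) + |D̂^T η̂| / (D̂^TD̂). -/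
/-!
With `L = σ²/τ²`, `G = ZᵀZ + L•1`, `u = ZᵀD̂` and `δ = α̂ - α`, the normal equations of the ridge
problem read `(β̂ - β)‖D̂‖² = D̂ᵀη̂ - uᵀδ` and `Gδ = Zᵀη̂ - (β̂ - β)u - L(α - μ_α)`.
The matrix `AB⁻¹ = ‖D̂‖⁻² u (G⁻¹u)ᵀ` has rank one, so `c* ‖D̂‖² = uᵀq` with `q = G⁻¹u`.
Pairing the second equation with `q` and eliminating `β̂ - β` with the first gives
`(1 - c*) uᵀδ = qᵀZᵀP_{D̂}^⊥η̂ - L qᵀ(α - μ_α)`, and the bound follows by Cauchy–Schwarz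
together with the shrinkage estimate `‖q‖ ≤ c*‖γ̂‖`.
-/

open Matrix

/-- Euclidean norm of a vector. -/
noncomputable def enorm {k : ℕ} (v : Fin k → ℝ) : ℝ :=
  Real.sqrt (∑ i, v i ^ 2)

section DotProduct

variable {m k : Type*} [Fintype m] [Fintype k]

lemma sum_sq_eq_dotProduct_self (v : m → ℝ) : ∑ i, v i ^ 2 = v ⬝ᵥ v := by
  simp only [dotProduct, sq]

lemma dotProduct_self_nonneg (v : m → ℝ) : 0 ≤ v ⬝ᵥ v :=
  Fintype.sum_nonneg fun i => mul_self_nonneg (v i)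

lemma dotProduct_self_pos {v : m → ℝ} (hv : v ≠ 0) : 0 < v ⬝ᵥ v :=
  (dotProduct_self_nonneg v).lt_of_ne' (dotProduct_self_eq_zero.not.mpr hv)

lemma dotProduct_sq_le (v w : m → ℝ) : (v ⬝ᵥ w) ^ 2 ≤ (v ⬝ᵥ v) * (w ⬝ᵥ w) := by
  rw [← sum_sq_eq_dotProduct_self, ← sum_sq_eq_dotProduct_self]
  exact Finset.sum_mul_sq_le_sq_mul_sq Finset.univ v w

lemma dotProduct_gram_mulVec (Z : Matrix m k ℝ) (x y : k → ℝ) :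
    x ⬝ᵥ ((Zᵀ * Z) *ᵥ y) = (Z *ᵥ x) ⬝ᵥ (Z *ᵥ y) := by
  rw [← mulVec_mulVec, dotProduct_mulVec, vecMul_transpose]

end DotProduct

lemma enorm_nonneg {k : ℕ} (v : Fin k → ℝ) : 0 ≤ _root_.enorm v :=
  Real.sqrt_nonneg _

lemma enorm_eq_sqrt_dotProduct {k : ℕ} (v : Fin k → ℝ) : _root_.enorm v = √(v ⬝ᵥ v) := by
  rw [_root_.enorm, sum_sq_eq_dotProduct_self]

lemma abs_dotProduct_le_enorm_mul_enorm {k : ℕ} (v w : Fin k → ℝ) :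
    |v ⬝ᵥ w| ≤ _root_.enorm v * _root_.enorm w := by
  rw [enorm_eq_sqrt_dotProduct, enorm_eq_sqrt_dotProduct,
    ← Real.sqrt_mul (dotProduct_self_nonneg v)]
  exact Real.abs_le_sqrt (dotProduct_sq_le v w)

theorem spectrum_smul_vecMulVec_subset {𝕜 n : Type*} [Field 𝕜] [Fintype n] [DecidableEq n]
    (s : 𝕜) (u v : n → 𝕜) : spectrum 𝕜 (s • vecMulVec u v) ⊆ {0, s * (v ⬝ᵥ u)} := by
  intro θ hθ
  by_contra hne
  simp only [Set.mem_insert_iff, Set.mem_singleton_iff, not_or] at hne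
  obtain ⟨hθ0, hθs⟩ := hne
  rw [spectrum.mem_iff] at hθ
  apply hθ
  have hdecomp : algebraMap 𝕜 (Matrix n n 𝕜) θ - s • vecMulVec u v
      = θ • (1 + replicateCol Unit (-(θ⁻¹ * s) • u) * replicateRow Unit v) := by
    rw [← vecMulVec_eq, Algebra.algebraMap_eq_smul_one, smul_add, smul_vecMulVec, neg_smul,
      smul_neg, smul_smul, mul_inv_cancel_left₀ hθ0, sub_eq_add_neg]
  rw [hdecomp, isUnit_iff_isUnit_det, det_smul, det_one_add_replicateCol_mul_replicateRow,
    isUnit_iff_ne_zero, dotProduct_smul, smul_eq_mul]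
  refine mul_ne_zero (pow_ne_zero _ hθ0) fun h => hθs ?_
  have hθt : θ * (1 + -(θ⁻¹ * s) * (v ⬝ᵥ u)) = θ - s * (v ⬝ᵥ u) := by
    field_simp
    ring
  rw [h, mul_zero] at hθt
  linear_combination -hθt

theorem lmax_eq_of_spectrum_subset {J : ℕ} {M : Matrix (Fin J) (Fin J) ℝ} {t : ℝ}
    (hM : spectrum ℝ M ⊆ {0, t}) (hpos : 0 < lmax M) : lmax M = t := by
  rw [lmax] at hpos ⊢
  have hne : (spectrum ℝ M).Nonempty := by
    by_contra h
    rw [Set.not_nonempty_iff_eq_empty] at h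
    simp only [h, Real.sSup_empty, lt_self_iff_false] at hpos
  rcases hM (hne.csSup_mem ((Set.toFinite _).subset hM)) with h | h
  · exact absurd h hpos.ne'
  · exact h

theorem lmax_smul_vecMulVec {J : ℕ} {r : ℝ} {u v : Fin J → ℝ}
    (hpos : 0 < lmax (r • vecMulVec u v)) : lmax (r • vecMulVec u v) = r * (v ⬝ᵥ u) :=
  lmax_eq_of_spectrum_subset (spectrum_smul_vecMulVec_subset r u v) hpos

lemma eq_zero_of_forall_quadratic_nonneg {Q b : ℝ} (h : ∀ t : ℝ, 0 ≤ Q * t ^ 2 + b * t) :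
    b = 0 := by
  have hs : 0 < |Q| + 1 := by positivity
  have hval : (Q * (-b / (|Q| + 1)) ^ 2 + b * (-b / (|Q| + 1))) * (|Q| + 1) ^ 2
      = b ^ 2 * (Q - (|Q| + 1)) := by
    field_simp
    ring
  have := mul_nonneg (h (-b / (|Q| + 1))) (sq_nonneg (|Q| + 1))
  nlinarith [le_abs_self Q, sq_nonneg b, sq_pos_of_pos hs]

section Ridge

variable {m k : Type*} [Fintype m] [Fintype k]

lemma posDef_gram_add_smul_one [DecidableEq k] (Z : Matrix m k ℝ) {L : ℝ} (hL : 0 < L) :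
    (Zᵀ * Z + L • (1 : Matrix k k ℝ)).PosDef := by
  simpa only [conjTranspose_eq_transpose_of_trivial] using
    PosDef.posSemidef_add (posSemidef_conjTranspose_mul_self Z) (PosDef.one.smul hL)

lemma gram_add_smul_one_mul_gram [DecidableEq k] (Z : Matrix m k ℝ) (L : ℝ) :
    (Zᵀ * Z + L • (1 : Matrix k k ℝ)) * (Zᵀ * Z) = (Zᵀ * Z) * (Zᵀ * Z + L • 1) := by
  rw [Matrix.add_mul, Matrix.mul_add, Matrix.smul_mul, Matrix.mul_smul, Matrix.one_mul,
    Matrix.mul_one]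

theorem transpose_mul_smul_vecMulVec_mul_smul_inv [DecidableEq k] (Z : Matrix m k ℝ)
    (D : m → ℝ) {r s : ℝ} (hs : s ≠ 0) {G : Matrix k k ℝ} (hG : IsUnit G.det) :
    (s⁻¹ • (Zᵀ * (r • vecMulVec D D) * Z)) * (s⁻¹ • G)⁻¹
      = r • vecMulVec (Zᵀ *ᵥ D) ((Zᵀ *ᵥ D) ᵥ* G⁻¹) := by
  have hinv : (s⁻¹ • G)⁻¹ = s • G⁻¹ := inv_eq_right_inv <| by
    rw [smul_mul_smul_comm, inv_mul_cancel₀ hs, one_smul, mul_nonsing_inv _ hG]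
  rw [hinv, smul_mul_smul_comm, inv_mul_cancel₀ hs, one_smul, Matrix.mul_smul, Matrix.smul_mul,
    Matrix.smul_mul, mul_vecMulVec, vecMulVec_mul, vecMulVec_mul, mulVec_transpose]

lemma dotProduct_eq_of_forall_le {r v : m → ℝ} {s w : k → ℝ} {L : ℝ}
    (h : ∀ t : ℝ, r ⬝ᵥ r + L * (s ⬝ᵥ s) ≤
      (r - t • v) ⬝ᵥ (r - t • v) + L * ((s + t • w) ⬝ᵥ (s + t • w))) :
    v ⬝ᵥ r = L * (w ⬝ᵥ s) := by
  have := eq_zero_of_forall_quadratic_nonneg (Q := v ⬝ᵥ v + L * (w ⬝ᵥ w))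
    (b := 2 * (L * (w ⬝ᵥ s) - v ⬝ᵥ r)) fun t => by
    have ht := h t
    simp only [dotProduct_sub, sub_dotProduct, dotProduct_add, add_dotProduct, dotProduct_smul,
      smul_dotProduct, smul_eq_mul, dotProduct_comm r v, dotProduct_comm s w] at ht
    linear_combination ht
  linarith

theorem ridge_normal_equations {Y D : m → ℝ} {Z : Matrix m k ℝ} {μ αh : k → ℝ} {L βh : ℝ}
    (hmin : ∀ (b : ℝ) (a : k → ℝ),
      (∑ i, (Y i - βh * D i - (Z *ᵥ αh) i) ^ 2) + L * ∑ j, (αh j - μ j) ^ 2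
        ≤ (∑ i, (Y i - b * D i - (Z *ᵥ a) i) ^ 2) + L * ∑ j, (a j - μ j) ^ 2) :
    D ⬝ᵥ (Y - βh • D - Z *ᵥ αh) = 0 ∧ Zᵀ *ᵥ (Y - βh • D - Z *ᵥ αh) = L • (αh - μ) := by
  have hobj (b : ℝ) (a : k → ℝ) : (∑ i, (Y i - b * D i - (Z *ᵥ a) i) ^ 2)
      + L * ∑ j, (a j - μ j) ^ 2 = (Y - b • D - Z *ᵥ a) ⬝ᵥ (Y - b • D - Z *ᵥ a)
        + L * ((a - μ) ⬝ᵥ (a - μ)) := by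
    simp only [← sum_sq_eq_dotProduct_self, Pi.sub_apply, Pi.smul_apply, smul_eq_mul]
  have hdir (x : ℝ) (w : k → ℝ) :
      (x • D + Z *ᵥ w) ⬝ᵥ (Y - βh • D - Z *ᵥ αh) = L * (w ⬝ᵥ (αh - μ)) := by
    refine dotProduct_eq_of_forall_le fun t => ?_
    have ht := hmin (βh + t * x) (αh + t • w)
    have hres : Y - (βh + t * x) • D - Z *ᵥ (αh + t • w)
        = Y - βh • D - Z *ᵥ αh - t • (x • D + Z *ᵥ w) := by
      rw [mulVec_add, mulVec_smul]
      module
    rwa [hobj, hobj, hres, add_sub_right_comm] at ht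
  constructor
  · simpa only [one_smul, mulVec_zero, add_zero, zero_dotProduct, mul_zero] using hdir 1 0
  · refine dotProduct_eq _ _ fun w => ?_
    rw [dotProduct_comm, dotProduct_mulVec, vecMul_transpose, smul_dotProduct, smul_eq_mul,
      dotProduct_comm (αh - μ)]
    simpa only [zero_smul, zero_add] using hdir 0 w

theorem ridge_error_equations [DecidableEq k] {Y D η : m → ℝ} {Z : Matrix m k ℝ}
    {α μ αh : k → ℝ} {L β βh : ℝ} (hY : Y = β • D + Z *ᵥ α + η)
    (hD : D ⬝ᵥ (Y - βh • D - Z *ᵥ αh) = 0) (hZ : Zᵀ *ᵥ (Y - βh • D - Z *ᵥ αh) = L • (αh - μ)) :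
    (βh - β) * (D ⬝ᵥ D) = D ⬝ᵥ η - (Zᵀ *ᵥ D) ⬝ᵥ (αh - α) ∧
      (Zᵀ * Z + L • 1) *ᵥ (αh - α) = Zᵀ *ᵥ η - (βh - β) • (Zᵀ *ᵥ D) - L • (α - μ) := by
  have hres : Y - βh • D - Z *ᵥ αh = η - (βh - β) • D - Z *ᵥ (αh - α) := by
    rw [hY, mulVec_sub]
    module
  rw [hres] at hD hZ
  constructor
  · have hDZ : D ⬝ᵥ (Z *ᵥ (αh - α)) = (Zᵀ *ᵥ D) ⬝ᵥ (αh - α) := by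
      rw [dotProduct_mulVec, mulVec_transpose]
    rw [dotProduct_sub, dotProduct_sub, dotProduct_smul, smul_eq_mul, hDZ] at hD
    linear_combination -hD
  · rw [mulVec_sub, mulVec_sub, mulVec_smul, mulVec_mulVec] at hZ
    rw [add_mulVec, smul_mulVec, one_mulVec]
    linear_combination (norm := module) -hZ

theorem one_sub_mul_dotProduct_eq [DecidableEq m] [DecidableEq k] {Z : Matrix m k ℝ}
    {D η : m → ℝ} {q δ v : k → ℝ} {L c e : ℝ} (hS : D ⬝ᵥ D ≠ 0)
    (hq : (Zᵀ * Z + L • 1) *ᵥ q = Zᵀ *ᵥ D) (hc : c * (D ⬝ᵥ D) = (Zᵀ *ᵥ D) ⬝ᵥ q)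
    (he : e * (D ⬝ᵥ D) = D ⬝ᵥ η - (Zᵀ *ᵥ D) ⬝ᵥ δ)
    (hδ : (Zᵀ * Z + L • 1) *ᵥ δ = Zᵀ *ᵥ η - e • (Zᵀ *ᵥ D) - L • v) :
    (1 - c) * ((Zᵀ *ᵥ D) ⬝ᵥ δ) =
      q ⬝ᵥ (Zᵀ *ᵥ ((1 - (D ⬝ᵥ D)⁻¹ • vecMulVec D D) *ᵥ η)) - L * (q ⬝ᵥ v) := by
  have hsymm (x y : k → ℝ) :
      ((Zᵀ * Z + L • 1) *ᵥ x) ⬝ᵥ y = x ⬝ᵥ ((Zᵀ * Z + L • 1) *ᵥ y) := by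
    rw [dotProduct_mulVec, ← mulVec_transpose]
    simp only [transpose_add, transpose_mul, transpose_transpose, transpose_smul, transpose_one]
  have hself : (Zᵀ *ᵥ D) ⬝ᵥ δ = q ⬝ᵥ (Zᵀ *ᵥ η) - e * ((Zᵀ *ᵥ D) ⬝ᵥ q) - L * (q ⬝ᵥ v) := by
    have h := hsymm q δ
    rw [hq, hδ] at h
    rw [h, dotProduct_sub, dotProduct_sub, dotProduct_smul, dotProduct_smul, smul_eq_mul,
      smul_eq_mul, dotProduct_comm q (Zᵀ *ᵥ D)]
  have hproj : q ⬝ᵥ (Zᵀ *ᵥ ((1 - (D ⬝ᵥ D)⁻¹ • vecMulVec D D) *ᵥ η))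
      = q ⬝ᵥ (Zᵀ *ᵥ η) - (D ⬝ᵥ D)⁻¹ * (D ⬝ᵥ η) * ((Zᵀ *ᵥ D) ⬝ᵥ q) := by
    rw [sub_mulVec, one_mulVec, smul_mulVec, vecMulVec_mulVec, mulVec_sub, mulVec_smul,
      mulVec_smul]
    simp only [op_smul_eq_smul, dotProduct_comm q, sub_dotProduct, smul_dotProduct, smul_eq_mul,
      sub_right_inj]
    ring
  have hcancel : (D ⬝ᵥ D)⁻¹ * (D ⬝ᵥ η) * (c * (D ⬝ᵥ D)) = c * (D ⬝ᵥ η) := by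
    field_simp
  rw [hproj, ← hc, hcancel]
  linear_combination hself - c * he + e * hc

end Ridge

theorem tsls_lmax_mul_dotProduct_self {n J : ℕ} (Z : Matrix (Fin n) (Fin J) ℝ) {D : Fin n → ℝ}
    (hD0 : D ≠ 0) {σsq τsq : ℝ} (hσ : 0 < σsq) (hτ : 0 < τsq) {c : ℝ}
    (hc : c = lmax ((((n : ℝ) * σsq)⁻¹ • (Zᵀ * ((D ⬝ᵥ D)⁻¹ • vecMulVec D D) * Z))
      * ((n : ℝ)⁻¹ • (σsq⁻¹ • (Zᵀ * Z) + τsq⁻¹ • (1 : Matrix (Fin J) (Fin J) ℝ)))⁻¹))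
    (hc0 : 0 < c) :
    c * (D ⬝ᵥ D) = (Zᵀ *ᵥ D) ⬝ᵥ ((Zᵀ * Z + (σsq / τsq) • 1)⁻¹ *ᵥ (Zᵀ *ᵥ D)) := by
  have hn : (n : ℝ) ≠ 0 := Nat.cast_ne_zero.mpr (by rintro rfl; exact hD0 (Subsingleton.elim _ _))
  have hG := (isUnit_iff_isUnit_det _).mp (posDef_gram_add_smul_one Z (div_pos hσ hτ)).isUnit
  have hB : (n : ℝ)⁻¹ • (σsq⁻¹ • (Zᵀ * Z) + τsq⁻¹ • (1 : Matrix (Fin J) (Fin J) ℝ))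
      = ((n : ℝ) * σsq)⁻¹ • (Zᵀ * Z + (σsq / τsq) • 1) := by
    rw [smul_add, smul_add, smul_smul, smul_smul, smul_smul]
    congr 2 <;> field_simp
  rw [hB, transpose_mul_smul_vecMulVec_mul_smul_inv Z D (mul_ne_zero hn hσ.ne') hG] at hc
  rw [hc, lmax_smul_vecMulVec (hc ▸ hc0), ← dotProduct_mulVec]
  field_simp [(dotProduct_self_pos hD0).ne']

/-- With `a, b, d, e` the moments `pᵀKʲp` (`j = 0, …, 3`) of a positive semidefinite `K`,
the hypotheses are their log-convexity (Cauchy–Schwarz). -/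
lemma sqrt_mul_le_sqrt_mul_of_moments {L a b d e : ℝ} (hL : 0 ≤ L) (ha : 0 ≤ a) (hb : 0 ≤ b)
    (hd : 0 ≤ d) (he : 0 ≤ e) (hbad : b ^ 2 ≤ a * d) (hdbe : d ^ 2 ≤ b * e) :
    √d * (e + 2 * L * d + L ^ 2 * b) ≤ √(d + 2 * L * b + L ^ 2 * a) * (e + L * d) := by
  have hbdae : b * d ≤ a * e := by nlinarith [mul_nonneg hb hd, mul_nonneg ha he]
  have hsq : d * (e + 2 * L * d + L ^ 2 * b) ^ 2
      ≤ (d + 2 * L * b + L ^ 2 * a) * (e + L * d) ^ 2 := by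
    have hmid : 0 ≤ a * e ^ 2 + 2 * b * d * e - 3 * d ^ 3 := by
      nlinarith [mul_le_mul_of_nonneg_right hbdae he]
    have := sub_nonneg.mpr hdbe
    have := sub_nonneg.mpr hbdae
    have := sub_nonneg.mpr hbad
    rw [← sub_nonneg]
    calc (0 : ℝ) ≤ 2 * L * e * (b * e - d ^ 2) + L ^ 2 * (a * e ^ 2 + 2 * b * d * e - 3 * d ^ 3)
          + 2 * L ^ 3 * d * (a * e - b * d) + L ^ 4 * d * (a * d - b ^ 2) := by positivity
      _ = _ := by ring
  calc √d * (e + 2 * L * d + L ^ 2 * b) = √(d * (e + 2 * L * d + L ^ 2 * b) ^ 2) := by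
        rw [Real.sqrt_mul hd, Real.sqrt_sq (by positivity)]
    _ ≤ √((d + 2 * L * b + L ^ 2 * a) * (e + L * d) ^ 2) := Real.sqrt_le_sqrt hsq
    _ = √(d + 2 * L * b + L ^ 2 * a) * (e + L * d) := by
        rw [Real.sqrt_mul (by positivity), Real.sqrt_sq (by positivity)]

theorem enorm_gram_mulVec_mul_le {m : Type*} [Fintype m] {J : ℕ} (Z : Matrix m (Fin J) ℝ)
    {L : ℝ} (hL : 0 ≤ L) {γ p : Fin J → ℝ} (hp : (Zᵀ * Z + L • 1) *ᵥ p = γ) :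
    _root_.enorm ((Zᵀ * Z) *ᵥ p) * ((Z *ᵥ γ) ⬝ᵥ (Z *ᵥ γ))
      ≤ _root_.enorm γ * (((Zᵀ * Z) *ᵥ p) ⬝ᵥ ((Zᵀ * Z) *ᵥ γ)) := by
  set q := (Zᵀ * Z) *ᵥ p
  have hγ : γ = q + L • p := by rw [← hp, add_mulVec, smul_mulVec, one_mulVec]
  have hpq : p ⬝ᵥ q = (Z *ᵥ p) ⬝ᵥ (Z *ᵥ p) := dotProduct_gram_mulVec Z p p
  have hqq : q ⬝ᵥ q = (Z *ᵥ p) ⬝ᵥ (Z *ᵥ q) :=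
    (dotProduct_gram_mulVec Z q p).trans (dotProduct_comm _ _)
  have hnorm : γ ⬝ᵥ γ = q ⬝ᵥ q + 2 * L * ((Z *ᵥ p) ⬝ᵥ (Z *ᵥ p)) + L ^ 2 * (p ⬝ᵥ p) := by
    rw [hγ, ← hpq]
    simp only [dotProduct_add, add_dotProduct, dotProduct_smul, smul_dotProduct, smul_eq_mul,
      dotProduct_comm q p]
    ring
  have hgram : (Z *ᵥ γ) ⬝ᵥ (Z *ᵥ γ) = (Z *ᵥ q) ⬝ᵥ (Z *ᵥ q) + 2 * L * (q ⬝ᵥ q)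
      + L ^ 2 * ((Z *ᵥ p) ⬝ᵥ (Z *ᵥ p)) := by
    rw [hγ, hqq, mulVec_add, mulVec_smul]
    simp only [dotProduct_add, add_dotProduct, dotProduct_smul, smul_dotProduct, smul_eq_mul,
      dotProduct_comm (Z *ᵥ q) (Z *ᵥ p)]
    ring
  have hcross : q ⬝ᵥ ((Zᵀ * Z) *ᵥ γ) = (Z *ᵥ q) ⬝ᵥ (Z *ᵥ q) + L * (q ⬝ᵥ q) := by
    rw [hγ, mulVec_add, mulVec_smul, dotProduct_add, dotProduct_smul, smul_eq_mul,
      dotProduct_gram_mulVec]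
  have hbad := dotProduct_sq_le p q
  have hdbe := dotProduct_sq_le (Z *ᵥ p) (Z *ᵥ q)
  rw [hpq] at hbad
  rw [← hqq] at hdbe
  rw [enorm_eq_sqrt_dotProduct, enorm_eq_sqrt_dotProduct, hnorm, hgram, hcross]
  exact sqrt_mul_le_sqrt_mul_of_moments hL (dotProduct_self_nonneg _) (dotProduct_self_nonneg _)
    (dotProduct_self_nonneg _) (dotProduct_self_nonneg _) hbad hdbe

theorem enorm_gram_mulVec_le {m : Type*} [Fintype m] {J : ℕ} (Z : Matrix m (Fin J) ℝ)
    {L c : ℝ} (hL : 0 ≤ L) {γ p : Fin J → ℝ} (hp : (Zᵀ * Z + L • 1) *ᵥ p = γ)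
    (hpos : 0 < (Z *ᵥ γ) ⬝ᵥ (Z *ᵥ γ))
    (hc : c * ((Z *ᵥ γ) ⬝ᵥ (Z *ᵥ γ)) = ((Zᵀ * Z) *ᵥ γ) ⬝ᵥ ((Zᵀ * Z) *ᵥ p)) :
    _root_.enorm ((Zᵀ * Z) *ᵥ p) ≤ c * _root_.enorm γ := by
  have h := enorm_gram_mulVec_mul_le Z hL hp
  rw [dotProduct_comm ((Zᵀ * Z) *ᵥ p), ← hc] at h
  exact le_of_mul_le_mul_right (h.trans_eq (by ring)) hpos

theorem abs_le_of_error_identity {n J : ℕ} {D η : Fin n → ℝ} {q w v γ : Fin J → ℝ}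
    {L c e x : ℝ} (hS : 0 < D ⬝ᵥ D) (hL : 0 ≤ L) (hc : c < 1)
    (he : e * (D ⬝ᵥ D) = D ⬝ᵥ η - x) (hx : (1 - c) * x = q ⬝ᵥ w - L * (q ⬝ᵥ v))
    (hq : _root_.enorm q ≤ c * _root_.enorm γ) :
    |e| ≤ c * L * _root_.enorm γ * _root_.enorm v / ((1 - c) * (D ⬝ᵥ D))
      + c * _root_.enorm γ * _root_.enorm w / ((1 - c) * (D ⬝ᵥ D)) + |D ⬝ᵥ η| / (D ⬝ᵥ D) := by
  have h1c : 0 < 1 - c := sub_pos.mpr hc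
  have hx' : |x| * (1 - c) ≤ c * _root_.enorm γ * _root_.enorm w
      + c * L * _root_.enorm γ * _root_.enorm v := calc
    |x| * (1 - c) = |q ⬝ᵥ w - L * (q ⬝ᵥ v)| := by rw [← hx, abs_mul, abs_of_pos h1c, mul_comm]
    _ ≤ |q ⬝ᵥ w| + L * |q ⬝ᵥ v| :=
      (abs_sub _ _).trans_eq (by rw [abs_mul, abs_of_nonneg hL])
    _ ≤ _root_.enorm q * _root_.enorm w + L * (_root_.enorm q * _root_.enorm v) := by
      gcongr <;> exact abs_dotProduct_le_enorm_mul_enorm _ _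
    _ ≤ c * _root_.enorm γ * _root_.enorm w + L * (c * _root_.enorm γ * _root_.enorm v) := by
      gcongr <;> exact enorm_nonneg _
    _ = _ := by ring
  have he' : |e| * (D ⬝ᵥ D) ≤ |D ⬝ᵥ η| + |x| := by
    rw [← abs_of_pos hS, ← abs_mul, he]; exact abs_sub _ _
  have hxle := (le_div_iff₀ h1c).mpr hx'
  calc |e| = |e| * (D ⬝ᵥ D) / (D ⬝ᵥ D) := by field_simp
    _ ≤ (|D ⬝ᵥ η| + |x|) / (D ⬝ᵥ D) := by gcongr
    _ ≤ (|D ⬝ᵥ η| + (c * _root_.enorm γ * _root_.enorm w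
          + c * L * _root_.enorm γ * _root_.enorm v) / (1 - c)) / (D ⬝ᵥ D) := by gcongr
    _ = _ := by field_simp; ring

/-- Theorem 1: empirical error bound for the ridge-type TSLS
estimator.  With `Y = D̂β + Zα + η̂`, `D̂ = Zγ̂ ≠ 0`,
`A = Zᵀ P_{D̂} Z/(nσ²)`, `B = (ZᵀZ/σ² + τ⁻²I)/n`, `c* = Λ_max(AB⁻¹) ∈ (0,1)`,
and `(β̂, α̂)` minimizing `‖Y − D̂b − Za‖² + (σ²/τ²)‖a − μ_α‖²`, one has
`|β̂ − β| ≤ c*σ²‖γ̂‖‖α − μ_α‖/(τ²(1−c*)D̂ᵀD̂)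
  + c*‖γ̂‖‖Zᵀ P_{D̂}^⊥ η̂‖/((1−c*)D̂ᵀD̂) + |D̂ᵀη̂|/(D̂ᵀD̂)`. -/
theorem stmt_7 {n J : ℕ} (Z : Matrix (Fin n) (Fin J) ℝ) (γ : Fin J → ℝ)
    (D : Fin n → ℝ) (hD : D = Z.mulVec γ) (hD0 : D ≠ 0)
    (β : ℝ) (α μα : Fin J → ℝ) (η Y : Fin n → ℝ)
    (hY : Y = β • D + Z.mulVec α + η)
    (τsq σsq : ℝ) (hτ : 0 < τsq) (hσ : 0 < σsq)
    (P : Matrix (Fin n) (Fin n) ℝ) (hP : P = (D ⬝ᵥ D)⁻¹ • vecMulVec D D)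
    (A B : Matrix (Fin J) (Fin J) ℝ)
    (hA : A = ((n : ℝ) * σsq)⁻¹ • (Zᵀ * P * Z))
    (hB : B = (n : ℝ)⁻¹ • (σsq⁻¹ • (Zᵀ * Z) + τsq⁻¹ • (1 : Matrix (Fin J) (Fin J) ℝ)))
    (c : ℝ) (hc : c = lmax (A * B⁻¹)) (hc0 : 0 < c) (hc1 : c < 1)
    (βh : ℝ) (αh : Fin J → ℝ)
    (hmin : ∀ (b : ℝ) (a : Fin J → ℝ),
      (∑ i, (Y i - βh * D i - Z.mulVec αh i) ^ 2)
          + σsq / τsq * ∑ j, (αh j - μα j) ^ 2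
        ≤ (∑ i, (Y i - b * D i - Z.mulVec a i) ^ 2)
          + σsq / τsq * ∑ j, (a j - μα j) ^ 2) :
    |βh - β| ≤
      c * σsq * _root_.enorm γ * _root_.enorm (fun j => α j - μα j) / (τsq * (1 - c) * (D ⬝ᵥ D))
        + c * _root_.enorm γ * _root_.enorm (Zᵀ.mulVec ((1 - P).mulVec η)) / ((1 - c) * (D ⬝ᵥ D))
        + |D ⬝ᵥ η| / (D ⬝ᵥ D) := by
  subst hP
  rw [hA, hB] at hc
  have hS : 0 < D ⬝ᵥ D := dotProduct_self_pos hD0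
  have hL : 0 < σsq / τsq := div_pos hσ hτ
  set G := Zᵀ * Z + (σsq / τsq) • (1 : Matrix (Fin J) (Fin J) ℝ)
  have hG : IsUnit G.det := (isUnit_iff_isUnit_det _).mp (posDef_gram_add_smul_one Z hL).isUnit
  obtain ⟨hresD, hresZ⟩ := ridge_normal_equations hmin
  obtain ⟨he, hδ⟩ := ridge_error_equations hY hresD hresZ
  obtain ⟨p, hp⟩ : ∃ p, G *ᵥ p = γ :=
    ⟨G⁻¹ *ᵥ γ, by rw [mulVec_mulVec, mul_nonsing_inv _ hG, one_mulVec]⟩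
  have hu : (Zᵀ * Z) *ᵥ γ = Zᵀ *ᵥ D := by rw [hD, mulVec_mulVec]
  have hq : G *ᵥ ((Zᵀ * Z) *ᵥ p) = Zᵀ *ᵥ D := by
    rw [mulVec_mulVec, gram_add_smul_one_mul_gram, ← mulVec_mulVec, hp, hu]
  have hGinv : G⁻¹ *ᵥ (Zᵀ *ᵥ D) = (Zᵀ * Z) *ᵥ p := by
    rw [← hq, mulVec_mulVec, nonsing_inv_mul _ hG, one_mulVec]
  have hcS : c * (D ⬝ᵥ D) = (Zᵀ *ᵥ D) ⬝ᵥ ((Zᵀ * Z) *ᵥ p) :=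
    (tsls_lmax_mul_dotProduct_self Z hD0 hσ hτ hc hc0).trans (congrArg _ hGinv)
  have hshrink : _root_.enorm ((Zᵀ * Z) *ᵥ p) ≤ c * _root_.enorm γ :=
    enorm_gram_mulVec_le Z hL.le hp (hD ▸ hS) (by rw [← hD, hu, hcS])
  have hx := one_sub_mul_dotProduct_eq hS.ne' hq hcS he hδ
  convert abs_le_of_error_identity hS hL.le hc1 he hx hshrink using 3
  field_simp
  rfl
end
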